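/- arXiv:1403.6139 — 2 statements merged into one kernel-verified Lean document; each statement's English description precedes it below -/
import Mathlib

section
/- (Isoperimetric inequality relative to the real axis.) For every smooth curve γ : [0,1] → ℂ with both endpoints γ(0), γ(1) on the real axis ℝ ⊂ ℂ, the action |∫₀¹ γ*λ| is bounded by (1/(2π)) · length(γ)², where λ = (1/2)(x dy − y dx). -/
open Real MeasureTheory intervalIntegral

open Filter Topology


lemma zero_on {w : ℝ → ℝ} (hw : Continuous w) (hw0 : ∀ t, 0 ≤ w t) {a b : ℝ}
    (hab : a < b) (h : ∫ t in a..b, w t = 0) : ∀ t ∈ Set.Icc a b, w t = 0 := by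
  by_contra hc
  push_neg at hc
  obtain ⟨t, ht, htne⟩ := hc
  have hpos : 0 < ∫ t in a..b, w t :=
    intervalIntegral.integral_pos hab hw.continuousOn (fun x _ => hw0 x)
      ⟨t, ht, lt_of_le_of_ne (hw0 t) (Ne.symm htne)⟩
  rw [h] at hpos; exact lt_irrefl 0 hpos

set_option maxHeartbeats 4000000 in
lemma isop_aux (Y D X' w : ℝ → ℝ)
    (hYD : ∀ t, HasDerivAt Y (D t) t)
    (hD : Continuous D) (hX' : Continuous X') (hw : Continuous w)
    (hsq : ∀ t, X' t ^ 2 + D t ^ 2 ≤ w t ^ 2)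
    (hw0 : ∀ t, 0 ≤ w t)
    (hY0 : Y 0 = 0) (hY1 : Y 1 = 0) :
    ∫ t in (0:ℝ)..1, |Y t * X' t| ≤ (1/(2*π)) * (∫ t in (0:ℝ)..1, w t)^2 := by
  have hY : Continuous Y := (Differentiable.continuous (fun t => (hYD t).differentiableAt))
  have hX'le : ∀ t, |X' t| ≤ w t := by
    intro t
    have h1 := hsq t
    nlinarith [abs_nonneg (X' t), sq_abs (X' t), sq_nonneg (D t), hw0 t]
  have hDle : ∀ t, |D t| ≤ w t := by
    intro t
    have h1 := hsq t
    nlinarith [abs_nonneg (D t), sq_abs (D t), sq_nonneg (X' t), hw0 t]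
  set L := ∫ t in (0:ℝ)..1, w t with hLdef
  have hL0 : 0 ≤ L := intervalIntegral.integral_nonneg (by norm_num) (fun u _ => hw0 u)
  clear_value L
  rcases eq_or_lt_of_le hL0 with hL | hL
  · -- degenerate case L = 0
    have hwz : ∀ t ∈ Set.Icc (0:ℝ) 1, w t = 0 := zero_on hw hw0 one_pos (hLdef.symm.trans hL.symm)
    have hz : ∫ t in (0:ℝ)..1, |Y t * X' t| = 0 := by
      rw [show (∫ t in (0:ℝ)..1, |Y t * X' t|) = ∫ t in (0:ℝ)..1, (0:ℝ) from
        intervalIntegral.integral_congr ?_]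
      · simp
      · intro t ht
        rw [Set.uIcc_of_le (by norm_num : (0:ℝ) ≤ 1)] at ht
        have h1 := hX'le t
        have h2 := hwz t ht
        have h3 : X' t = 0 := by
          have := abs_nonneg (X' t); rw [h2] at h1
          exact abs_eq_zero.mp (le_antisymm h1 this)
        simp [h3]
    rw [hz, ← hL]
    norm_num
  · -- main case L > 0
    set c := π / L with hcdef
    have hc : 0 < c := div_pos pi_pos hL
    clear_value c
    have hwint : ∀ a b : ℝ, IntervalIntegrable w volume a b :=
      fun a b => hw.intervalIntegrable a b
    set s : ℝ → ℝ := fun t => c * ∫ u in (0:ℝ)..t, w u with hsdef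
    have hs_deriv : ∀ t, HasDerivAt s (c * w t) t := by
      intro t
      have h1 : HasDerivAt (fun u => ∫ x in (0:ℝ)..u, w x) (w t) t :=
        intervalIntegral.integral_hasDerivAt_right (hwint 0 t)
          (hw.stronglyMeasurableAtFilter _ _) hw.continuousAt
      simpa using h1.const_mul c
    have hs_cont : Continuous s :=
      Differentiable.continuous (fun t => (hs_deriv t).differentiableAt)
    have hs_sub : ∀ a b : ℝ, s b - s a = c * ∫ u in a..b, w u := by
      intro a b
      have h1 := intervalIntegral.integral_add_adjacent_intervals (hwint 0 a) (hwint a b)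
      simp only [hsdef]
      rw [← h1]; ring
    have hs_mono : Monotone s := by
      intro a b hab
      have h1 : 0 ≤ ∫ u in a..b, w u :=
        intervalIntegral.integral_nonneg hab (fun u _ => hw0 u)
      nlinarith [hs_sub a b]
    have hs0 : s 0 = 0 := by simp [hsdef]
    have hs1 : s 1 = π := by
      have : s 1 = c * L := by rw [hsdef, hLdef]
      rw [this, hcdef]
      field_simp
    clear_value s
    -- the first/last times the arclength hits 0 / π
    set T0 : Set ℝ := Set.Icc (0:ℝ) 1 ∩ {t | s t = 0} with hT0def
    set T1 : Set ℝ := Set.Icc (0:ℝ) 1 ∩ {t | s t = π} with hT1def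
    have hT0c : IsCompact T0 :=
      isCompact_Icc.inter_right (isClosed_eq hs_cont continuous_const)
    have hT1c : IsCompact T1 :=
      isCompact_Icc.inter_right (isClosed_eq hs_cont continuous_const)
    have hT0ne : T0.Nonempty := ⟨0, ⟨le_refl _, by norm_num⟩, hs0⟩
    have hT1ne : T1.Nonempty := ⟨1, ⟨by norm_num, le_refl _⟩, hs1⟩
    set t0 := sSup T0 with ht0def
    set t1 := sInf T1 with ht1def
    have ht0mem : t0 ∈ T0 := hT0c.sSup_mem hT0ne
    have ht1mem : t1 ∈ T1 := hT1c.sInf_mem hT1ne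
    have hst0 : s t0 = 0 := ht0mem.2
    have hst1 : s t1 = π := ht1mem.2
    have ht00 : 0 ≤ t0 := ht0mem.1.1
    have ht11 : t1 ≤ 1 := ht1mem.1.2
    have ht01 : t0 < t1 := by
      by_contra hle
      push_neg at hle
      have h2 := hs_mono hle
      rw [hst1, hst0] at h2
      exact absurd h2 (not_le.mpr pi_pos)
    have hsin_mid : ∀ t, t0 < t → t < t1 → 0 < s t ∧ s t < π := by
      intro t h1 h2
      constructor
      · rcases lt_or_eq_of_le (hs0 ▸ hs_mono (le_trans ht00 h1.le)) with h | h
        · exact h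
        · exfalso
          have htT0 : t ∈ T0 := ⟨⟨le_trans ht00 h1.le, le_trans h2.le ht11⟩, h.symm⟩
          exact absurd (le_csSup hT0c.bddAbove htT0) (not_le.mpr h1)
      · rcases lt_or_eq_of_le (hs1 ▸ hs_mono (le_trans h2.le ht11)) with h | h
        · exact h
        · exfalso
          have htT1 : t ∈ T1 := ⟨⟨le_trans ht00 h1.le, le_trans h2.le ht11⟩, h⟩
          exact absurd (csInf_le hT1c.bddBelow htT1) (not_le.mpr h2)
    have hint_left : (∫ u in (0:ℝ)..t0, w u) = 0 := by
      have h1 := hs_sub 0 t0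
      rw [hst0, hs0] at h1
      have := hc.ne'
      field_simp at h1
      have h2 : c * ∫ u in (0:ℝ)..t0, w u = 0 := by rw [← h1]; ring
      exact (mul_eq_zero.mp h2).resolve_left this
    have hint_right : (∫ u in t1..(1:ℝ), w u) = 0 := by
      have h1 := hs_sub t1 1
      rw [hst1, hs1] at h1
      have := hc.ne'
      field_simp at h1
      have h2 : c * ∫ u in t1..(1:ℝ), w u = 0 := by rw [← h1]; ring
      exact (mul_eq_zero.mp h2).resolve_left this
    -- Y vanishes at t0 and t1
    have hYt0 : Y t0 = 0 := by
      rcases eq_or_lt_of_le ht00 with h0 | h0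
      · rw [← h0]; exact hY0
      · have hwz := zero_on hw hw0 h0 hint_left
        have hftc : ∫ u in (0:ℝ)..t0, D u = Y t0 - Y 0 :=
          intervalIntegral.integral_eq_sub_of_hasDerivAt
            (fun u _ => hYD u) (hD.intervalIntegrable _ _)
        have hDz : ∫ u in (0:ℝ)..t0, D u = ∫ u in (0:ℝ)..t0, (0:ℝ) := by
          apply intervalIntegral.integral_congr
          intro u hu
          rw [Set.uIcc_of_le h0.le] at hu
          have h1 := hDle u
          rw [hwz u hu] at h1
          have h2 := abs_nonneg (D u)
          exact abs_eq_zero.mp (le_antisymm h1 h2)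
        rw [hDz] at hftc
        simp at hftc
        linarith [hY0]
    have hYt1 : Y t1 = 0 := by
      rcases eq_or_lt_of_le ht11 with h0 | h0
      · rw [h0]; exact hY1
      · have hwz := zero_on hw hw0 h0 hint_right
        have hftc : ∫ u in t1..(1:ℝ), D u = Y 1 - Y t1 :=
          intervalIntegral.integral_eq_sub_of_hasDerivAt
            (fun u _ => hYD u) (hD.intervalIntegrable _ _)
        have hDz : ∫ u in t1..(1:ℝ), D u = ∫ u in t1..(1:ℝ), (0:ℝ) := by
          apply intervalIntegral.integral_congr
          intro u hu
          rw [Set.uIcc_of_le h0.le] at hu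
          have h1 := hDle u
          rw [hwz u hu] at h1
          have h2 := abs_nonneg (D u)
          exact abs_eq_zero.mp (le_antisymm h1 h2)
        rw [hDz] at hftc
        simp at hftc
        linarith [hY1]
    -- bounds for Y in terms of arclength from either end
    have hYb1 : ∀ a ∈ Set.Icc t0 t1, |Y a| ≤ s a / c := by
      intro a ha
      have hftc : ∫ u in t0..a, D u = Y a - Y t0 :=
        intervalIntegral.integral_eq_sub_of_hasDerivAt
          (fun u _ => hYD u) (hD.intervalIntegrable _ _)
      have habs : |∫ u in t0..a, D u| ≤ ∫ u in t0..a, |D u| :=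
        intervalIntegral.abs_integral_le_integral_abs ha.1
      have hmono : ∫ u in t0..a, |D u| ≤ ∫ u in t0..a, w u :=
        intervalIntegral.integral_mono_on ha.1 (hD.abs.intervalIntegrable _ _)
          (hwint _ _) (fun u _ => hDle u)
      have heq : ∫ u in t0..a, w u = s a / c := by
        have h1 := hs_sub t0 a
        rw [hst0] at h1
        field_simp at h1 ⊢
        linarith
      rw [hftc, hYt0, sub_zero] at habs
      linarith
    have hYb2 : ∀ b ∈ Set.Icc t0 t1, |Y b| ≤ (π - s b) / c := by
      intro b hb
      have hftc : ∫ u in b..t1, D u = Y t1 - Y b :=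
        intervalIntegral.integral_eq_sub_of_hasDerivAt
          (fun u _ => hYD u) (hD.intervalIntegrable _ _)
      have habs : |∫ u in b..t1, D u| ≤ ∫ u in b..t1, |D u| :=
        intervalIntegral.abs_integral_le_integral_abs hb.2
      have hmono : ∫ u in b..t1, |D u| ≤ ∫ u in b..t1, w u :=
        intervalIntegral.integral_mono_on hb.2 (hD.abs.intervalIntegrable _ _)
          (hwint _ _) (fun u _ => hDle u)
      have heq : ∫ u in b..t1, w u = (π - s b) / c := by
        have h1 := hs_sub b t1
        rw [hst1] at h1
        field_simp at h1 ⊢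
        linarith
      rw [hftc, hYt1, zero_sub, abs_neg] at habs
      linarith
    -- the comparison integrand
    set H : ℝ → ℝ := fun t => c/2 * w t * Y t^2 + X' t^2 / (2*c*w t) with hHdef
    have hX'zero : ∀ t, w t = 0 → X' t = 0 := by
      intro t h
      have h1 := hX'le t
      rw [h] at h1
      exact abs_eq_zero.mp (le_antisymm h1 (abs_nonneg _))
    have hDzero : ∀ t, w t = 0 → D t = 0 := by
      intro t h
      have h1 := hDle t
      rw [h] at h1
      exact abs_eq_zero.mp (le_antisymm h1 (abs_nonneg _))
    have hHzero : ∀ t, w t = 0 → H t = 0 := by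
      intro t h
      rw [hHdef]
      simp [h, hX'zero t h]
    have hHnn : ∀ t, 0 ≤ H t := by
      intro t
      have h1 : 0 ≤ c/2 * w t * Y t^2 :=
        mul_nonneg (mul_nonneg (by positivity) (hw0 t)) (sq_nonneg _)
      have h2 : 0 ≤ X' t^2 / (2*c*w t) :=
        div_nonneg (sq_nonneg _) (mul_nonneg (by positivity) (hw0 t))
      simp only [hHdef]
      linarith
    have hHmeas : Measurable H := by
      apply Measurable.add
      · fun_prop
      · exact (hX'.measurable.pow_const 2).div
          ((measurable_const.mul hw.measurable))
    have hHbound : ∀ t, H t ≤ c/2 * w t * Y t^2 + w t / (2*c) := by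
      intro t
      rcases (hw0 t).eq_or_lt with h | h
      · rw [hHzero t h.symm, ← h]
        simp
      · have h2 : X' t^2 ≤ w t^2 := by nlinarith [sq_nonneg (D t), hsq t]
        have h3 : X' t^2/(2*c*w t) ≤ w t^2/(2*c*w t) := by gcongr
        have h4 : w t^2/(2*c*w t) = w t/(2*c) := by
          field_simp
        simp only [hHdef]
        linarith [h3, h4]
    have hHint : ∀ a b : ℝ, IntervalIntegrable H volume a b := by
      intro a b
      have hbig : IntervalIntegrable (fun t => c/2 * w t * Y t^2 + w t/(2*c)) volume a b := by
        apply Continuous.intervalIntegrable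
        fun_prop
      apply hbig.mono_fun' hHmeas.aestronglyMeasurable
      apply Filter.Eventually.of_forall
      intro t
      show ‖H t‖ ≤ _
      rw [Real.norm_eq_abs, abs_of_nonneg (hHnn t)]
      exact hHbound t
    -- pointwise AM-GM bound
    have hpt : ∀ t, |Y t * X' t| ≤ H t := by
      intro t
      rcases (hw0 t).eq_or_lt with h | h
      · rw [hHzero t h.symm, hX'zero t h.symm]
        simp
      · rw [abs_mul, ← sub_nonneg]
        have hY2 : Y t^2 = |Y t|^2 := (sq_abs _).symm
        have hX2 : X' t^2 = |X' t|^2 := (sq_abs _).symm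
        have key : (H t - |Y t| * |X' t|) * (2*c*w t)
            = (c * w t * |Y t| - |X' t|)^2 := by
          simp only [hHdef]
          field_simp
          ring_nf
          rw [← hY2, ← hX2]
        have hpos : 0 < 2*c*w t := by positivity
        have h7 : H t - |Y t| * |X' t| = (c * w t * |Y t| - |X' t|)^2 / (2*c*w t) := by
          rw [eq_div_iff hpos.ne']; exact key
        rw [h7]; positivity
    -- the calibration function F and its derivative φ
    set F : ℝ → ℝ := fun t => -(Y t^2 * Real.cos (s t) / (2 * Real.sin (s t))) with hFdef
    set φ : ℝ → ℝ := fun t => -(Y t * D t * Real.cos (s t) / Real.sin (s t))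
      + (c/2 * w t * Y t^2 + c/2 * w t * Y t^2 * Real.cos (s t)^2 / Real.sin (s t)^2) with hφdef
    have hF_deriv : ∀ t, 0 < s t → s t < π → HasDerivAt F (φ t) t := by
      intro t h1 h2
      have hσ : 0 < Real.sin (s t) := Real.sin_pos_of_pos_of_lt_pi h1 h2
      have hds := hs_deriv t
      have hYt := hYD t
      have hsq2 : HasDerivAt (fun u => Y u^2) (2 * Y t * D t) t := by
        have := hYt.fun_pow 2
        simpa [mul_comm, mul_assoc] using this
      have hcoss : HasDerivAt (fun u => Real.cos (s u)) (-Real.sin (s t) * (c * w t)) t :=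
        hds.cos
      have hnum : HasDerivAt (fun u => Y u^2 * Real.cos (s u))
          (2 * Y t * D t * Real.cos (s t) + Y t^2 * (-Real.sin (s t) * (c * w t))) t :=
        hsq2.mul hcoss
      have hden : HasDerivAt (fun u => 2 * Real.sin (s u))
          (2 * (Real.cos (s t) * (c * w t))) t := (hds.sin).const_mul 2
      have hdiv := (hnum.fun_div hden (by positivity)).fun_neg
      refine hdiv.congr_deriv ?_
      rw [hφdef]
      field_simp
      ring
    -- pointwise comparison with the calibration on the middle interval
    have hHφ : ∀ t, 0 < s t → s t < π → H t ≤ w t/(2*c) + φ t := by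
      intro t h1 h2
      have hσ : 0 < Real.sin (s t) := Real.sin_pos_of_pos_of_lt_pi h1 h2
      rcases (hw0 t).eq_or_lt with h | h
      · rw [hHzero t h.symm, hφdef]
        simp only [hDzero t h.symm, ← h]
        simp
      · rw [← sub_nonneg]
        have key : (w t/(2*c) + φ t - H t) * (2*c*w t*Real.sin (s t)^2)
            = (c * w t * Y t * Real.cos (s t) - D t * Real.sin (s t))^2
              + (w t^2 - X' t^2 - D t^2) * Real.sin (s t)^2 := by
          rw [hφdef, hHdef]
          field_simp
          ring
        have hpos : 0 < 2*c*w t*Real.sin (s t)^2 := by positivity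
        have h7 : w t/(2*c) + φ t - H t
            = ((c * w t * Y t * Real.cos (s t) - D t * Real.sin (s t))^2
              + (w t^2 - X' t^2 - D t^2) * Real.sin (s t)^2) / (2*c*w t*Real.sin (s t)^2) := by
          rw [eq_div_iff hpos.ne']; exact key
        rw [h7]
        have h8 : 0 ≤ w t^2 - X' t^2 - D t^2 := by linarith [hsq t]
        positivity
    clear_value t0 t1 H F φ
    -- main estimate over compact subintervals of (t0, t1)
    have hmain : ∀ a b, t0 < a → a ≤ b → b < t1 →
        (∫ t in a..b, H t) ≤ L/(2*c) + (F b - F a) := by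
      intro a b ha hab hb
      have hIcc : ∀ t ∈ Set.Icc a b, 0 < s t ∧ s t < π := fun t ht =>
        hsin_mid t (lt_of_lt_of_le ha ht.1) (lt_of_le_of_lt ht.2 hb)
      have hσne : ∀ t ∈ Set.Icc a b, Real.sin (s t) ≠ 0 := fun t ht =>
        (Real.sin_pos_of_pos_of_lt_pi (hIcc t ht).1 (hIcc t ht).2).ne'
      have c1 : Continuous fun t => Y t * D t * Real.cos (s t) :=
        (hY.mul hD).mul (Real.continuous_cos.comp hs_cont)
      have c2 : Continuous fun t => Real.sin (s t) := Real.continuous_sin.comp hs_cont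
      have c3 : Continuous fun t => c/2 * w t * Y t^2 :=
        (continuous_const.mul hw).mul (hY.pow 2)
      have hφcont : ContinuousOn φ (Set.Icc a b) := by
        rw [hφdef]
        exact ((c1.continuousOn.div c2.continuousOn hσne).neg).add
          (c3.continuousOn.add
            ((c3.mul ((Real.continuous_cos.comp hs_cont).pow 2)).continuousOn.div
              ((c2.pow 2).continuousOn)
              (fun t ht => pow_ne_zero 2 (hσne t ht))))
      have hφint : IntervalIntegrable φ volume a b := by
        rw [intervalIntegrable_iff_integrableOn_Icc_of_le hab]
        exact hφcont.integrableOn_compact isCompact_Icc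
      have hFTC : ∫ t in a..b, φ t = F b - F a := by
        apply intervalIntegral.integral_eq_sub_of_hasDerivAt
        · intro t ht
          rw [Set.uIcc_of_le hab] at ht
          exact hF_deriv t (hIcc t ht).1 (hIcc t ht).2
        · exact hφint
      have hgcont : ContinuousOn (fun t => w t/(2*c) + φ t) (Set.Icc a b) :=
        (hw.div_const (2*c)).continuousOn.add hφcont
      have hgint : IntervalIntegrable (fun t => w t/(2*c) + φ t) volume a b := by
        rw [intervalIntegrable_iff_integrableOn_Icc_of_le hab]
        exact hgcont.integrableOn_compact isCompact_Icc
      have hmono : (∫ t in a..b, H t) ≤ ∫ t in a..b, (w t/(2*c) + φ t) :=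
        intervalIntegral.integral_mono_on hab (hHint a b) hgint
          (fun t ht => hHφ t (hIcc t ht).1 (hIcc t ht).2)
      have hwdivint : IntervalIntegrable (fun t => w t/(2*c)) volume a b :=
        (hw.div_const (2*c)).intervalIntegrable a b
      have hsplit2 : (∫ t in a..b, (w t/(2*c) + φ t))
          = (∫ t in a..b, w t)/(2*c) + (F b - F a) := by
        rw [intervalIntegral.integral_add hwdivint hφint, hFTC,
          intervalIntegral.integral_div]
      have hwle : (∫ u in a..b, w u) ≤ L := by
        have e1 := intervalIntegral.integral_add_adjacent_intervals (hwint 0 a) (hwint a b)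
        have e2 := intervalIntegral.integral_add_adjacent_intervals (hwint 0 b) (hwint b 1)
        have n1 : 0 ≤ ∫ u in (0:ℝ)..a, w u :=
          intervalIntegral.integral_nonneg (le_trans ht00 ha.le) (fun u _ => hw0 u)
        have n2 : 0 ≤ ∫ u in b..(1:ℝ), w u :=
          intervalIntegral.integral_nonneg (le_trans hb.le ht11) (fun u _ => hw0 u)
        rw [hLdef]
        linarith
      have hdivle : (∫ u in a..b, w u)/(2*c) ≤ L/(2*c) := by gcongr
      linarith
    -- bounds for F near the endpoints
    have hFb1 : ∀ a, t0 < a → a < t1 → s a ≤ π/2 → |F a| ≤ π/(4*c^2) * s a := by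
      intro a h1 h2 h3
      have hsp : 0 < s a := (hsin_mid a h1 h2).1
      have hσ : 0 < Real.sin (s a) :=
        Real.sin_pos_of_pos_of_lt_pi hsp (lt_of_le_of_lt h3 (half_lt_self pi_pos))
      have hσge : 2/π * s a ≤ Real.sin (s a) := Real.mul_le_sin hsp.le h3
      have hYle : |Y a| ≤ s a / c := hYb1 a ⟨h1.le, h2.le⟩
      have hY2 : Y a^2 ≤ (s a/c)^2 := by
        rw [← sq_abs (Y a)]
        exact pow_le_pow_left₀ (abs_nonneg _) hYle 2
      have habs : |F a| = Y a^2 * |Real.cos (s a)| / (2*Real.sin (s a)) := by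
        rw [hFdef, abs_neg, abs_div, abs_mul, abs_of_nonneg (sq_nonneg (Y a)),
          abs_of_pos (by positivity : (0:ℝ) < 2*Real.sin (s a))]
      have hnum : Y a^2 * |Real.cos (s a)| ≤ (s a/c)^2 := by
        calc Y a^2 * |Real.cos (s a)| ≤ Y a^2 * 1 :=
              mul_le_mul_of_nonneg_left (Real.abs_cos_le_one _) (sq_nonneg _)
          _ = Y a^2 := mul_one _
          _ ≤ (s a/c)^2 := hY2
      have hden : 2 * (2/π * s a) ≤ 2 * Real.sin (s a) := by linarith
      have hstep : |F a| ≤ (s a/c)^2 / (2 * (2/π * s a)) := by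
        rw [habs]
        exact div_le_div₀ (sq_nonneg _) hnum (by positivity) hden
      have heq : (s a/c)^2 / (2 * (2/π * s a)) = π/(4*c^2) * s a := by
        field_simp
        ring
      linarith
    have hFb2 : ∀ b, t0 < b → b < t1 → π/2 ≤ s b → |F b| ≤ π/(4*c^2) * (π - s b) := by
      intro b h1 h2 h3
      have hsp : s b < π := (hsin_mid b h1 h2).2
      have hτ : 0 < π - s b := by linarith
      have hσ : 0 < Real.sin (s b) :=
        Real.sin_pos_of_pos_of_lt_pi (lt_of_lt_of_le (by positivity) h3) hsp
      have hσge : 2/π * (π - s b) ≤ Real.sin (s b) := by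
        have := Real.mul_le_sin (le_of_lt hτ) (by linarith)
        rwa [Real.sin_pi_sub] at this
      have hYle : |Y b| ≤ (π - s b) / c := hYb2 b ⟨h1.le, h2.le⟩
      have hY2 : Y b^2 ≤ ((π - s b)/c)^2 := by
        rw [← sq_abs (Y b)]
        exact pow_le_pow_left₀ (abs_nonneg _) hYle 2
      have habs : |F b| = Y b^2 * |Real.cos (s b)| / (2*Real.sin (s b)) := by
        rw [hFdef, abs_neg, abs_div, abs_mul, abs_of_nonneg (sq_nonneg (Y b)),
          abs_of_pos (by positivity : (0:ℝ) < 2*Real.sin (s b))]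
      have hnum : Y b^2 * |Real.cos (s b)| ≤ ((π - s b)/c)^2 := by
        calc Y b^2 * |Real.cos (s b)| ≤ Y b^2 * 1 :=
              mul_le_mul_of_nonneg_left (Real.abs_cos_le_one _) (sq_nonneg _)
          _ = Y b^2 := mul_one _
          _ ≤ ((π - s b)/c)^2 := hY2
      have hden : 2 * (2/π * (π - s b)) ≤ 2 * Real.sin (s b) := by linarith
      have hstep : |F b| ≤ ((π - s b)/c)^2 / (2 * (2/π * (π - s b))) := by
        rw [habs]
        exact div_le_div₀ (sq_nonneg _) hnum (by positivity) hden
      have heq : ((π - s b)/c)^2 / (2 * (2/π * (π - s b))) = π/(4*c^2) * (π - s b) := by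
        field_simp
        ring
      linarith
    -- sequences approaching t0 and t1
    set δ : ℕ → ℝ := fun n => (t1 - t0)/((n:ℝ)+2) with hδdef
    have hδpos : ∀ n, 0 < δ n := fun n => div_pos (by linarith) (by positivity)
    have hδhalf : ∀ n : ℕ, 2 * δ n ≤ t1 - t0 := by
      intro n
      have hn : (0:ℝ) ≤ (n:ℝ) := Nat.cast_nonneg n
      have key : δ n ≤ (t1 - t0)/2 := by
        rw [hδdef]
        show (t1 - t0)/((n:ℝ)+2) ≤ (t1 - t0)/2
        rw [div_le_div_iff₀ (by positivity) (by norm_num)]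
        nlinarith [ht01]
      linarith
    have hδlim : Tendsto δ atTop (𝓝 0) := by
      apply Tendsto.div_atTop (tendsto_const_nhds (x := t1 - t0))
      exact tendsto_atTop_add_const_right atTop 2 tendsto_natCast_atTop_atTop
    set a : ℕ → ℝ := fun n => t0 + δ n with hadef
    set b : ℕ → ℝ := fun n => t1 - δ n with hbdef
    have ha1 : ∀ n, t0 < a n := fun n => lt_add_of_pos_right t0 (hδpos n)
    have hb1 : ∀ n, b n < t1 := fun n => sub_lt_self t1 (hδpos n)
    have hab : ∀ n, a n ≤ b n := by
      intro n
      have := hδhalf n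
      rw [hadef, hbdef]
      simp only
      linarith
    have ha_lim : Tendsto a atTop (𝓝 t0) := by
      have := tendsto_const_nhds (x := t0) (f := atTop (α := ℕ)) |>.add hδlim
      simpa using this
    have hb_lim : Tendsto b atTop (𝓝 t1) := by
      have := tendsto_const_nhds (x := t1) (f := atTop (α := ℕ)) |>.sub hδlim
      simpa using this
    have han_mem : ∀ n, a n ∈ Set.Icc t0 t1 := fun n =>
      ⟨(ha1 n).le, le_trans (hab n) (hb1 n).le⟩
    have hbn_mem : ∀ n, b n ∈ Set.Icc t0 t1 := fun n =>
      ⟨le_trans (ha1 n).le (hab n), (hb1 n).le⟩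
    -- the primitive of H
    set G : ℝ → ℝ := fun u => ∫ t in t0..u, H t with hGdef
    have hGcont : Continuous G := by
      rw [hGdef]
      exact intervalIntegral.continuous_primitive (fun u v => hHint u v) t0
    have hGa : Tendsto (fun n => G (a n)) atTop (𝓝 (G t0)) :=
      (hGcont.tendsto t0).comp ha_lim
    have hGb : Tendsto (fun n => G (b n)) atTop (𝓝 (G t1)) :=
      (hGcont.tendsto t1).comp hb_lim
    have hint_n : ∀ n, (∫ t in (a n)..(b n), H t) = G (b n) - G (a n) := by
      intro n
      have e1 := intervalIntegral.integral_add_adjacent_intervals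
        (hHint t0 (a n)) (hHint (a n) (b n))
      rw [hGdef]
      simp only
      linarith
    have hGt0 : G t0 = 0 := intervalIntegral.integral_same
    have hIlim : Tendsto (fun n => ∫ t in (a n)..(b n), H t) atTop
        (𝓝 (∫ t in t0..t1, H t)) := by
      have h1 := hGb.sub hGa
      rw [hGt0, sub_zero] at h1
      have h2 : (fun n => G (b n) - G (a n)) = fun n => ∫ t in (a n)..(b n), H t := by
        funext n
        rw [hint_n n]
      rwa [h2] at h1
    -- F (a n) → 0 and F (b n) → 0
    have hs_an_lim : Tendsto (fun n => s (a n)) atTop (𝓝 0) := by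
      have := (hs_cont.tendsto t0).comp ha_lim
      rwa [hst0] at this
    have hs_bn_lim : Tendsto (fun n => s (b n)) atTop (𝓝 π) := by
      have := (hs_cont.tendsto t1).comp hb_lim
      rwa [hst1] at this
    have hFa_lim : Tendsto (fun n => F (a n)) atTop (𝓝 0) := by
      apply squeeze_zero_norm' (a := fun n => π/(4*c^2) * s (a n))
      · have hev : ∀ᶠ n in atTop, s (a n) < π/2 :=
          hs_an_lim.eventually_lt_const (by positivity)
        filter_upwards [hev] with n hn
        rw [Real.norm_eq_abs]
        exact hFb1 (a n) (ha1 n) (lt_of_le_of_lt (hab n) (hb1 n)) hn.le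
      · have := (tendsto_const_nhds (x := π/(4*c^2)) (f := atTop (α := ℕ))).mul hs_an_lim
        simpa using this
    have hFb_lim : Tendsto (fun n => F (b n)) atTop (𝓝 0) := by
      apply squeeze_zero_norm' (a := fun n => π/(4*c^2) * (π - s (b n)))
      · have hev : ∀ᶠ n in atTop, π/2 < s (b n) :=
          hs_bn_lim.eventually_const_lt (half_lt_self pi_pos)
        filter_upwards [hev] with n hn
        rw [Real.norm_eq_abs]
        exact hFb2 (b n) (lt_of_lt_of_le (ha1 n) (hab n)) (hb1 n) hn.le
      · have h1 : Tendsto (fun n => π - s (b n)) atTop (𝓝 0) := by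
          have := (tendsto_const_nhds (x := π) (f := atTop (α := ℕ))).sub hs_bn_lim
          simpa using this
        have := (tendsto_const_nhds (x := π/(4*c^2)) (f := atTop (α := ℕ))).mul h1
        simpa using this
    -- pass to the limit
    have hRlim : Tendsto (fun n => L/(2*c) + (F (b n) - F (a n))) atTop (𝓝 (L/(2*c))) := by
      have := (tendsto_const_nhds (x := L/(2*c)) (f := atTop (α := ℕ))).add
        (hFb_lim.sub hFa_lim)
      simpa using this
    have hmid : (∫ t in t0..t1, H t) ≤ L/(2*c) :=
      le_of_tendsto_of_tendsto' hIlim hRlim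
        (fun n => hmain (a n) (b n) (ha1 n) (hab n) (hb1 n))
    -- the two side pieces vanish
    have hHzl : (∫ t in (0:ℝ)..t0, H t) = 0 := by
      rcases eq_or_lt_of_le ht00 with h0 | h0
      · rw [← h0, intervalIntegral.integral_same]
      · have hwz := zero_on hw hw0 h0 hint_left
        rw [show (∫ t in (0:ℝ)..t0, H t) = ∫ t in (0:ℝ)..t0, (0:ℝ) from
          intervalIntegral.integral_congr ?_]
        · simp
        · intro t ht
          rw [Set.uIcc_of_le h0.le] at ht
          exact hHzero t (hwz t ht)
    have hHzr : (∫ t in t1..(1:ℝ), H t) = 0 := by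
      rcases eq_or_lt_of_le ht11 with h0 | h0
      · rw [h0, intervalIntegral.integral_same]
      · have hwz := zero_on hw hw0 h0 hint_right
        rw [show (∫ t in t1..(1:ℝ), H t) = ∫ t in t1..(1:ℝ), (0:ℝ) from
          intervalIntegral.integral_congr ?_]
        · simp
        · intro t ht
          rw [Set.uIcc_of_le h0.le] at ht
          exact hHzero t (hwz t ht)
    have htotal : (∫ t in (0:ℝ)..1, H t) = ∫ t in t0..t1, H t := by
      have e1 := intervalIntegral.integral_add_adjacent_intervals (hHint 0 t0) (hHint t0 1)
      have e2 := intervalIntegral.integral_add_adjacent_intervals (hHint t0 t1) (hHint t1 1)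
      rw [hHzl] at e1
      rw [hHzr] at e2
      linarith
    -- final assembly
    have hfin1 : (∫ t in (0:ℝ)..1, |Y t * X' t|) ≤ ∫ t in (0:ℝ)..1, H t :=
      intervalIntegral.integral_mono_on (by norm_num)
        (((hY.mul hX').abs).intervalIntegrable 0 1) (hHint 0 1) (fun t _ => hpt t)
    have heqc : L/(2*c) = 1/(2*π) * L^2 := by
      rw [hcdef]
      field_simp
    rw [htotal] at hfin1
    linarith

/-- Isoperimetric inequality relative to the real axis: for every smooth
curve `γ : [0,1] → ℂ` with both endpoints on `ℝ ⊂ ℂ`, the action `|∫₀¹ γ*λ|` with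
`λ = (1/2)(x dy − y dx)` is bounded by `(1/(2π)) · length(γ)²`. -/
theorem stmt_5 (γ : ℝ → ℂ) (hγ : ContDiff ℝ (⊤ : ℕ∞) γ)
    (h0 : (γ 0).im = 0) (h1 : (γ 1).im = 0) :
    |(1 / 2) * ∫ t in (0 : ℝ)..1,
        ((γ t).re * (deriv γ t).im - (γ t).im * (deriv γ t).re)|
      ≤ (1 / (2 * π)) * (∫ t in (0 : ℝ)..1, ‖deriv γ t‖) ^ 2 := by
  have hdiff : Differentiable ℝ γ := hγ.differentiable (by simp)
  have hd : ∀ t, HasDerivAt γ (deriv γ t) t := fun t => (hdiff t).hasDerivAt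
  have hdc : Continuous (deriv γ) := hγ.continuous_deriv (by simp)
  set X : ℝ → ℝ := fun t => (γ t).re with hXdef
  set Y : ℝ → ℝ := fun t => (γ t).im with hYdef
  set X' : ℝ → ℝ := fun t => (deriv γ t).re with hX'def
  set D : ℝ → ℝ := fun t => (deriv γ t).im with hDdef
  set w : ℝ → ℝ := fun t => ‖deriv γ t‖ with hwdef
  have hXd : ∀ t, HasDerivAt X (X' t) t := by
    intro t
    exact (Complex.reCLM.hasFDerivAt.comp_hasDerivAt t (hd t))
  have hYd : ∀ t, HasDerivAt Y (D t) t := by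
    intro t
    exact (Complex.imCLM.hasFDerivAt.comp_hasDerivAt t (hd t))
  have hX'c : Continuous X' := Complex.continuous_re.comp hdc
  have hDc : Continuous D := Complex.continuous_im.comp hdc
  have hwc : Continuous w := hdc.norm
  have hXc : Continuous X := Complex.continuous_re.comp hγ.continuous
  have hYc : Continuous Y := Complex.continuous_im.comp hγ.continuous
  have hsq : ∀ t, X' t ^ 2 + D t ^ 2 ≤ w t ^ 2 := by
    intro t
    have : ‖deriv γ t‖ ^ 2 = (deriv γ t).re ^ 2 + (deriv γ t).im ^ 2 := by
      rw [Complex.sq_norm, Complex.normSq_apply]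
      ring
    rw [hwdef, hX'def, hDdef, this]
  have hw0 : ∀ t, 0 ≤ w t := fun t => norm_nonneg _
  -- integration by parts
  have hibp : (∫ t in (0:ℝ)..1, X t * D t) = - ∫ t in (0:ℝ)..1, X' t * Y t := by
    have h := intervalIntegral.integral_mul_deriv_eq_deriv_mul_of_hasDerivAt
      (u := X) (v := Y) (u' := X') (v' := D)
      hXc.continuousOn hYc.continuousOn
      (fun x _ => hXd x) (fun x _ => hYd x)
      (hX'c.intervalIntegrable 0 1) (hDc.intervalIntegrable 0 1)
    have hY1 : Y 1 = 0 := h1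
    have hY0 : Y 0 = 0 := h0
    rw [hY1, hY0] at h
    simpa using h
  have hint1 : IntervalIntegrable (fun t => X t * D t) volume 0 1 :=
    (hXc.mul hDc).intervalIntegrable 0 1
  have hint2 : IntervalIntegrable (fun t => Y t * X' t) volume 0 1 :=
    (hYc.mul hX'c).intervalIntegrable 0 1
  have hsplit : (∫ t in (0:ℝ)..1, (X t * D t - Y t * X' t))
      = -2 * ∫ t in (0:ℝ)..1, Y t * X' t := by
    rw [intervalIntegral.integral_sub hint1 hint2, hibp]
    have : (∫ t in (0:ℝ)..1, X' t * Y t) = ∫ t in (0:ℝ)..1, Y t * X' t := by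
      apply intervalIntegral.integral_congr
      intro t _
      exact mul_comm _ _
    rw [this]
    ring
  have hgoal_eq : |(1 / 2) * ∫ t in (0 : ℝ)..1,
      ((γ t).re * (deriv γ t).im - (γ t).im * (deriv γ t).re)|
      = |∫ t in (0:ℝ)..1, Y t * X' t| := by
    have : (∫ t in (0 : ℝ)..1, ((γ t).re * (deriv γ t).im - (γ t).im * (deriv γ t).re))
        = ∫ t in (0:ℝ)..1, (X t * D t - Y t * X' t) := rfl
    rw [this, hsplit]
    rw [abs_mul, abs_mul]
    rw [abs_of_nonneg (show (0:ℝ) ≤ 1/2 by norm_num),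
      abs_of_nonpos (show (-2:ℝ) ≤ 0 by norm_num)]
    ring
  rw [hgoal_eq]
  have habs : |∫ t in (0:ℝ)..1, Y t * X' t| ≤ ∫ t in (0:ℝ)..1, |Y t * X' t| :=
    intervalIntegral.abs_integral_le_integral_abs (by norm_num)
  have hkey := isop_aux Y D X' w hYd hDc hX'c hwc hsq hw0 h0 h1
  exact le_trans habs hkey
end

section
/- (Length of image circles tends to zero.) Let f : B_1(0)\{0} → ℂ be holomorphic with finite energy, and for 0 < r < 1/2 let γ_r(θ) = f(r e^{iθ}), θ ∈ [0, 2π]. Suppose the mean value inequality |f'(z)|² ≤ (C/ρ²)∫_{B_ρ(z)}|f'|² holds for all discs B_ρ(z) ⊆ B_1(0)\{0}. Then length(γ_r)² ≤ 8π²C · ∫_{B_{2r}(0)\{0}} |f'|², and in particular length(γ_r) → 0 as r → 0. -/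
open MeasureTheory Metric Filter Real Topology

/-!
The point `z = r e^{iθ}` has `|z| = r`, so the disc `B_r(z)` lies in the punctured disc
`B_{2r}(0) \ {0}`. The mean value inequality on `B_r(z)` bounds `|γ_r'(θ)| = r |f'(z)|` by
`√(C E(2r))`, where `E(ρ)` is the energy of `f` on `B_ρ(0) \ {0}`, so that
`length(γ_r) ≤ 2π √(C E(2r))`. Finally `E(ρ) → 0` by absolute continuity of the integral of
the integrable energy density.
-/

lemma ball_norm_subset_punctured_ball {E : Type*} [NormedAddCommGroup E] (z : E) :
    ball z ‖z‖ ⊆ ball 0 (2 * ‖z‖) \ {0} := by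
  intro w hw
  rw [mem_ball] at hw
  refine ⟨?_, ?_⟩
  · rw [mem_ball_zero_iff]
    linarith [norm_le_norm_add_norm_sub' w z, dist_eq_norm w z]
  · rintro rfl
    simp at hw

lemma tendsto_volume_ball_zero (x : ℂ) :
    Tendsto (fun ρ : ℝ => volume (ball x ρ)) (𝓝 0) (𝓝 0) := by
  simp_rw [Complex.volume_ball]
  have hcont : Continuous fun ρ : ℝ => ENNReal.ofReal ρ ^ 2 * NNReal.pi :=
    (ENNReal.continuous_mul_const ENNReal.coe_ne_top).comp
      ((ENNReal.continuous_pow 2).comp ENNReal.continuous_ofReal)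
  simpa using hcont.tendsto 0

theorem MeasureTheory.IntegrableOn.tendsto_setIntegral_nhds_zero {α G ι : Type*}
    [MeasurableSpace α] [NormedAddCommGroup G] [NormedSpace ℝ G] {μ : Measure α}
    {g : α → G} {U : Set α} (hg : IntegrableOn g U μ) {l : Filter ι} {s : ι → Set α}
    (hsU : ∀ᶠ i in l, s i ⊆ U) (hs : Tendsto (μ ∘ s) l (𝓝 0)) :
    Tendsto (fun i => ∫ x in s i, g x ∂μ) l (𝓝 0) := by
  have hsU' : Tendsto (μ.restrict U ∘ s) l (𝓝 0) :=
    tendsto_of_tendsto_of_tendsto_of_le_of_le tendsto_const_nhds hs (fun _ => zero_le)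
      fun i => Measure.restrict_apply_le U (s i)
  refine (Integrable.tendsto_setIntegral_nhds_zero hg hsU').congr' ?_
  filter_upwards [hsU] with i hi
  rw [Measure.restrict_restrict_of_subset hi]

lemma tendsto_setIntegral_punctured_ball_zero {E : Type*} [NormedAddCommGroup E]
    [NormedSpace ℝ E] {g : ℂ → E} {R : ℝ} (hR : 0 < R)
    (hg : IntegrableOn g (ball 0 R \ {0})) :
    Tendsto (fun ρ : ℝ => ∫ z in ball 0 ρ \ {0}, g z) (𝓝 0) (𝓝 0) := by
  refine hg.tendsto_setIntegral_nhds_zero ?_ ?_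
  · filter_upwards [Iio_mem_nhds hR] with ρ hρ
    exact Set.sdiff_subset_sdiff_left (ball_subset_ball hρ.le)
  · exact tendsto_of_tendsto_of_tendsto_of_le_of_le tendsto_const_nhds
      (tendsto_volume_ball_zero 0) (fun _ => zero_le) fun ρ => measure_mono Set.sdiff_subset

lemma norm_deriv_comp_circle {f : ℂ → ℂ} {r θ : ℝ}
    (hf : DifferentiableAt ℂ f (r * Complex.exp (θ * Complex.I))) :
    ‖deriv (fun θ : ℝ => f (r * Complex.exp (θ * Complex.I))) θ‖
      = |r| * ‖deriv f (r * Complex.exp (θ * Complex.I))‖ := by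
  have hcirc : (fun θ : ℝ => f (r * Complex.exp (θ * Complex.I))) = f ∘ circleMap 0 r := by
    funext θ
    simp [circleMap]
  have hz : circleMap 0 r θ = r * Complex.exp (θ * Complex.I) := by simp [circleMap]
  rw [← hz] at hf ⊢
  rw [hcirc, (hf.hasDerivAt.comp θ (hasDerivAt_circleMap 0 r θ)).deriv, norm_mul, norm_mul,
    norm_circleMap_zero, Complex.norm_I, mul_one, mul_comm]

section MeanValue

variable {f : ℂ → ℂ} {U : Set ℂ} {C r : ℝ}

lemma norm_deriv_comp_circle_le (hC : 0 ≤ C) (hr : 0 < r) (hU : IsOpen U)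
    (hrU : ball 0 (2 * r) \ {0} ⊆ U) (hf : DifferentiableOn ℂ f U)
    (hE : IntegrableOn (fun z => ‖deriv f z‖ ^ 2) U)
    (hmv : ∀ (z : ℂ) (ρ : ℝ), 0 < ρ → ball z ρ ⊆ U →
      ‖deriv f z‖ ^ 2 ≤ (C / ρ ^ 2) * ∫ w in ball z ρ, ‖deriv f w‖ ^ 2) (θ : ℝ) :
    ‖deriv (fun θ : ℝ => f (r * Complex.exp (θ * Complex.I))) θ‖
      ≤ √(C * ∫ z in ball 0 (2 * r) \ {0}, ‖deriv f z‖ ^ 2) := by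
  set z : ℂ := r * Complex.exp (θ * Complex.I)
  have hz : ‖z‖ = r := by
    rw [norm_mul, Complex.norm_real, Complex.norm_exp_ofReal_mul_I, mul_one, norm_of_nonneg hr.le]
  have hball : ball z r ⊆ ball 0 (2 * r) \ {0} := hz ▸ ball_norm_subset_punctured_ball z
  have hzU : z ∈ U := hrU (hball (mem_ball_self hr))
  rw [norm_deriv_comp_circle (hf.differentiableAt (hU.mem_nhds hzU)), abs_of_pos hr,
    le_sqrt (by positivity) (mul_nonneg hC (setIntegral_nonneg_of_ae (.of_forall
      fun _ => by positivity)))]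
  calc (r * ‖deriv f z‖) ^ 2 = r ^ 2 * ‖deriv f z‖ ^ 2 := mul_pow _ _ _
    _ ≤ r ^ 2 * ((C / r ^ 2) * ∫ w in ball z r, ‖deriv f w‖ ^ 2) := by
        gcongr
        exact hmv z r hr (hball.trans hrU)
    _ = C * ∫ w in ball z r, ‖deriv f w‖ ^ 2 := by field_simp
    _ ≤ C * ∫ w in ball 0 (2 * r) \ {0}, ‖deriv f w‖ ^ 2 :=
        mul_le_mul_of_nonneg_left (setIntegral_mono_set (hE.mono_set hrU)
          (.of_forall fun _ => by positivity) hball.eventuallyLE) hC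

lemma integral_norm_deriv_comp_circle_le (hC : 0 ≤ C) (hr : 0 < r) (hU : IsOpen U)
    (hrU : ball 0 (2 * r) \ {0} ⊆ U) (hf : DifferentiableOn ℂ f U)
    (hE : IntegrableOn (fun z => ‖deriv f z‖ ^ 2) U)
    (hmv : ∀ (z : ℂ) (ρ : ℝ), 0 < ρ → ball z ρ ⊆ U →
      ‖deriv f z‖ ^ 2 ≤ (C / ρ ^ 2) * ∫ w in ball z ρ, ‖deriv f w‖ ^ 2) :
    ∫ θ in (0 : ℝ)..(2 * π), ‖deriv (fun θ : ℝ => f (r * Complex.exp (θ * Complex.I))) θ‖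
      ≤ 2 * π * √(C * ∫ z in ball 0 (2 * r) \ {0}, ‖deriv f z‖ ^ 2) := by
  have h := intervalIntegral.norm_integral_le_of_norm_le_const (a := 0) (b := 2 * π) fun θ _ =>
    (norm_norm _).trans_le (norm_deriv_comp_circle_le hC hr hU hrU hf hE hmv θ)
  rw [sub_zero, abs_of_pos two_pi_pos] at h
  exact (le_abs_self _).trans (h.trans_eq (mul_comm _ _))

end MeanValue

/-- Length of image circles tends to zero: for `f` holomorphic with finite
energy on the punctured unit disc satisfying the mean value inequality, the loops
`γ_r(θ) = f(re^{iθ})` satisfy `length(γ_r)² ≤ 8π²C ∫_{B_{2r}(0)\{0}} |f'|²` for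
`0 < r < 1/2`, and `length(γ_r) → 0` as `r → 0⁺`. -/
theorem stmt_11 (f : ℂ → ℂ) (C : ℝ) (hC : 0 < C)
    (hf : DifferentiableOn ℂ f (ball (0 : ℂ) 1 \ {0}))
    (hE : IntegrableOn (fun z => ‖deriv f z‖ ^ 2) (ball (0 : ℂ) 1 \ {0}))
    (hmv : ∀ (z : ℂ) (ρ : ℝ), 0 < ρ → ball z ρ ⊆ ball (0 : ℂ) 1 \ {0} →
      ‖deriv f z‖ ^ 2 ≤ (C / ρ ^ 2) * ∫ w in ball z ρ, ‖deriv f w‖ ^ 2) :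
    (∀ r : ℝ, 0 < r → r < 1 / 2 →
      (∫ θ in (0 : ℝ)..(2 * π),
          ‖deriv (fun θ : ℝ => f ((r : ℂ) * Complex.exp (θ * Complex.I))) θ‖) ^ 2
        ≤ 8 * π ^ 2 * C * ∫ z in ball (0 : ℂ) (2 * r) \ {0}, ‖deriv f z‖ ^ 2) ∧
    Tendsto (fun r : ℝ => ∫ θ in (0 : ℝ)..(2 * π),
        ‖deriv (fun θ : ℝ => f ((r : ℂ) * Complex.exp (θ * Complex.I))) θ‖)
      (nhdsWithin 0 (Set.Ioi 0)) (nhds 0) := by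
  set energy : ℝ → ℝ := fun r => ∫ z in ball (0 : ℂ) (2 * r) \ {0}, ‖deriv f z‖ ^ 2
  have henergy_nonneg (r : ℝ) : 0 ≤ energy r :=
    setIntegral_nonneg_of_ae (.of_forall fun _ => by positivity)
  have hlength (r : ℝ) (hr : 0 < r) (hr' : r < 1 / 2) :=
    integral_norm_deriv_comp_circle_le hC.le hr (isOpen_ball.sdiff isClosed_singleton)
      (Set.sdiff_subset_sdiff_left (ball_subset_ball (by linarith))) hf hE hmv
  have hlength_nonneg (r : ℝ) :
      0 ≤ ∫ θ in (0 : ℝ)..(2 * π), ‖deriv (fun θ : ℝ => f (r * Complex.exp (θ * Complex.I))) θ‖ :=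
    intervalIntegral.integral_nonneg two_pi_pos.le fun _ _ => norm_nonneg _
  refine ⟨fun r hr hr' => ?_, ?_⟩
  · calc _ ≤ (2 * π * √(C * energy r)) ^ 2 :=
          pow_le_pow_left₀ (hlength_nonneg r) (hlength r hr hr') 2
      _ = 4 * π ^ 2 * C * energy r := by
          rw [mul_pow, sq_sqrt (mul_nonneg hC.le (henergy_nonneg r))]
          ring
      _ ≤ 8 * π ^ 2 * C * energy r := by
          gcongr
          norm_num
  · have henergy : Tendsto energy (𝓝 0) (𝓝 0) := by
      have h2r : Tendsto (fun r : ℝ => 2 * r) (𝓝 0) (𝓝 0) :=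
        (continuous_const_mul 2).tendsto' 0 0 (mul_zero 2)
      exact (tendsto_setIntegral_punctured_ball_zero one_pos hE).comp h2r
    have hbound : Tendsto (fun r => 2 * π * √(C * energy r)) (𝓝[>] 0) (𝓝 0) := by
      simpa using ((henergy.const_mul C).sqrt.const_mul (2 * π)).mono_left nhdsWithin_le_nhds
    refine squeeze_zero' (.of_forall hlength_nonneg) ?_ hbound
    filter_upwards [Ioo_mem_nhdsGT (by norm_num : (0 : ℝ) < 1 / 2)] with r hr
    exact hlength r hr.1 hr.2
end
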